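/- arXiv:1811.12654 — 4 statements merged into one kernel-verified Lean document; each statement's English description precedes it below -/
import Mathlib

section
/- Let e₁, …, e_d be a basis of V and let c₁, …, c_d ∈ ℤ/4 satisfy 2·c_j = ι(b(e_j, e_j)) for each j. Then there exists a unique quadratic enhancement q of b with q(e_j) = c_j for all j. Consequently, the number of quadratic enhancements of b is exactly 2^d where d = dim V. -/
/-- The injective group homomorphism `ℤ/2 → ℤ/4` sending `1` to `2`. -/
def iota : ZMod 2 → ZMod 4 := fun x => 2 * (x.val : ZMod 4)

/-- `q : V → ℤ/4` is a quadratic enhancement of the bilinear form `b` if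
`q (x + y) = q x + q y + ι (b x y)` for all `x y`. -/
def IsQuadEnh {V : Type*} [AddCommGroup V] (b : V → V → ZMod 2) (q : V → ZMod 4) : Prop :=
  ∀ x y : V, q (x + y) = q x + q y + iota (b x y)

/-- The lift `ℤ/2 → ℤ/4` sending `0 ↦ 0`, `1 ↦ 1`. -/
def lft (a : ZMod 2) : ZMod 4 := (a.val : ZMod 4)

lemma lft_add : ∀ a b : ZMod 2, lft (a + b) = lft a + lft b + 2 * (lft a * lft b) := by decide
lemma iota_add' : ∀ a b : ZMod 2, iota (a + b) = iota a + iota b := by decide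
lemma iota_smul : ∀ a v : ZMod 2, iota (a * v) = lft a * iota v := by decide
lemma two_iota : ∀ v : ZMod 2, 2 * iota v = 0 := by decide
lemma iota_zero : iota 0 = 0 := by decide

/-- `iota` as an additive monoid hom. -/
def iotaHom : ZMod 2 →+ ZMod 4 := AddMonoidHom.mk' iota iota_add'

lemma key1 : ∀ u v cc B : ZMod 4, 2 * cc = B →
    (u + v + 2 * (u * v)) * cc = u * cc + v * cc + u * (v * B) := by decide

lemma key4 : ∀ u v s t w : ZMod 4, 2 * w = 0 →
    (u + v + 2 * (u * v)) * ((s + t + 2 * (s * t)) * w)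
      = u * (s * w) + u * (t * w) + v * (s * w) + v * (t * w) := by decide

lemma key0 : ∀ w t : ZMod 4, (0 : ZMod 4) = w + w + t → 2 * t = 0 → 2 * w = t := by decide

lemma card2 : ∀ v : ZMod 2, Nat.card {x : ZMod 4 // 2 * x = iota v} = 2 := by
  intro v
  rw [Nat.card_eq_fintype_card]
  revert v; decide

lemma pair_split {d : ℕ} (f : Fin d → Fin d → ZMod 4) :
    ∑ i, ∑ j, f i j = (∑ j, f j j) +
      ∑ p ∈ Finset.univ.filter (fun p : Fin d × Fin d => p.1 < p.2), (f p.1 p.2 + f p.2 p.1) := by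
  classical
  rw [← Fintype.sum_prod_type']
  rw [← Finset.sum_filter_add_sum_filter_not Finset.univ (fun p : Fin d × Fin d => p.1 = p.2)]
  congr 1
  · refine Finset.sum_nbij' (fun p => p.1) (fun k => (k, k)) ?_ ?_ ?_ ?_ ?_
    · simp
    · simp
    · intro p hp; simp at hp; ext <;> simp [hp]
    · intro k _; rfl
    · intro p hp; simp at hp; rw [← hp]
  · rw [← Finset.sum_filter_add_sum_filter_not _ (fun p : Fin d × Fin d => p.1 < p.2)]
    rw [Finset.sum_add_distrib]
    congr 1
    · apply Finset.sum_congr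
      · ext p; simp; omega
      · intros; rfl
    · refine Finset.sum_nbij' (fun p : Fin d × Fin d => (p.2, p.1)) (fun p => (p.2, p.1)) ?_ ?_ ?_ ?_ ?_
      · intro p hp; simp at hp ⊢; omega
      · intro p hp; simp at hp ⊢; omega
      · intros; rfl
      · intros; rfl
      · intros; rfl

section Main

variable {V : Type*} [AddCommGroup V] [Module (ZMod 2) V]
  (b : LinearMap.BilinForm (ZMod 2) V)
  {d : ℕ} (e : Module.Basis (Fin d) (ZMod 2) V)

/-- Any quadratic enhancement vanishes at `0`. -/
lemma quad_zero (q : V → ZMod 4) (hq : IsQuadEnh (fun x y => b x y) q) : q 0 = 0 := by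
  have h := hq 0 0
  simp only [add_zero, map_zero, LinearMap.zero_apply, iota_zero] at h
  have : q 0 + 0 = q 0 + q 0 := by rw [add_zero]; exact h
  exact (add_left_cancel this).symm

lemma quad_diag (q : V → ZMod 4) (hq : IsQuadEnh (fun x y => b x y) q) (v : V) :
    2 * q v = iota (b v v) := by
  have h := hq v v
  have h2 : v + v = 0 := by
    rw [← two_smul (ZMod 2) v, show (2 : ZMod 2) = 0 from rfl, zero_smul]
  rw [h2, quad_zero b q hq] at h
  exact key0 _ _ h (two_iota _)

/-- uniqueness of an enhancement with given values on a basis -/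
lemma quad_uniq (q q' : V → ZMod 4) (hq : IsQuadEnh (fun x y => b x y) q)
    (hq' : IsQuadEnh (fun x y => b x y) q') (hje : ∀ j, q (e j) = q' (e j)) : q = q' := by
  have hadd : ∀ x y : V, (q (x + y) - q' (x + y)) = (q x - q' x) + (q y - q' y) := by
    intro x y
    rw [hq x y, hq' x y]; ring
  let φ : V →+ ZMod 4 := AddMonoidHom.mk' (fun x => q x - q' x) hadd
  have hφ : ∀ x, φ x = 0 := by
    intro x
    have hx : x = ∑ j, e.repr x j • e j := (e.sum_repr x).symm
    rw [hx, map_sum]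
    apply Finset.sum_eq_zero
    intro j _
    have : ∀ z : ZMod 2, φ (z • e j) = 0 := by
      intro z
      fin_cases z
      · show φ ((0 : ZMod 2) • e j) = 0
        rw [zero_smul]; exact map_zero φ
      · show φ ((1 : ZMod 2) • e j) = 0
        rw [one_smul]
        show q (e j) - q' (e j) = 0
        rw [hje j, sub_self]
    exact this _
  funext x
  have := hφ x
  simpa [sub_eq_zero, φ] using this

/-- existence and uniqueness -/
lemma quad_exu (hb : ∀ x y : V, b x y = b y x) (c : Fin d → ZMod 4) (hc : ∀ j : Fin d, 2 * c j = iota (b (e j) (e j))) :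
    ∃! q : V → ZMod 4, IsQuadEnh (fun x y => b x y) q ∧ ∀ j : Fin d, q (e j) = c j := by
  classical
  set P : Finset (Fin d × Fin d) := Finset.univ.filter (fun p : Fin d × Fin d => p.1 < p.2) with hP
  set q0 : V → ZMod 4 := fun x => (∑ j, lft (e.repr x j) * c j) +
    ∑ p ∈ P, lft (e.repr x p.1) * (lft (e.repr x p.2) * iota (b (e p.1) (e p.2))) with hq0
  have hiotab : ∀ x y : V, iota (b x y)
      = ∑ i, ∑ j, lft (e.repr x i) * (lft (e.repr y j) * iota (b (e i) (e j))) := by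
    intro x y
    have hx : x = ∑ i, e.repr x i • e i := (e.sum_repr x).symm
    have hy : y = ∑ j, e.repr y j • e j := (e.sum_repr y).symm
    calc iota (b x y) = iotaHom (b x y) := rfl
      _ = iotaHom (∑ i, ∑ j, e.repr x i * (e.repr y j * b (e i) (e j))) := by
          congr 1
          conv_lhs => rw [hx, hy]
          simp only [map_sum, LinearMap.sum_apply, map_smul, LinearMap.smul_apply,
            smul_eq_mul, Finset.mul_sum]
          rw [Finset.sum_comm]
          apply Finset.sum_congr rfl
          intro i _
          apply Finset.sum_congr rfl
          intro j _
          ring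
      _ = ∑ i, ∑ j, lft (e.repr x i) * (lft (e.repr y j) * iota (b (e i) (e j))) := by
          rw [map_sum]
          apply Finset.sum_congr rfl
          intro i _
          rw [map_sum]
          apply Finset.sum_congr rfl
          intro j _
          show iota _ = _
          rw [iota_smul, iota_smul]
  have hq0enh : IsQuadEnh (fun x y => b x y) q0 := by
    intro x y
    have hrepr : ∀ j, e.repr (x + y) j = e.repr x j + e.repr y j := by
      intro j; rw [map_add]; rfl
    -- abbreviations
    set a : Fin d → ZMod 4 := fun j => lft (e.repr x j) with ha
    set a' : Fin d → ZMod 4 := fun j => lft (e.repr y j) with ha'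
    set B : Fin d → Fin d → ZMod 4 := fun i j => iota (b (e i) (e j)) with hB
    have hBsym : ∀ i j, B i j = B j i := fun i j => by rw [hB]; simp only; rw [hb (e i) (e j)]
    have h2B : ∀ i j, 2 * B i j = 0 := fun i j => two_iota _
    -- first sum
    have e1 : ∑ j, lft (e.repr (x + y) j) * c j
        = (∑ j, a j * c j) + (∑ j, a' j * c j) + ∑ j, a j * (a' j * B j j) := by
      rw [← Finset.sum_add_distrib, ← Finset.sum_add_distrib]
      apply Finset.sum_congr rfl
      intro j _
      rw [hrepr j, lft_add]
      exact key1 (a j) (a' j) (c j) (B j j) (hc j)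
    -- second sum
    have e2 : ∑ p ∈ P, lft (e.repr (x + y) p.1) * (lft (e.repr (x + y) p.2) * B p.1 p.2)
        = (∑ p ∈ P, a p.1 * (a p.2 * B p.1 p.2)) + (∑ p ∈ P, a p.1 * (a' p.2 * B p.1 p.2))
          + (∑ p ∈ P, a' p.1 * (a p.2 * B p.1 p.2)) + (∑ p ∈ P, a' p.1 * (a' p.2 * B p.1 p.2)) := by
      rw [← Finset.sum_add_distrib, ← Finset.sum_add_distrib, ← Finset.sum_add_distrib]
      apply Finset.sum_congr rfl
      intro p _
      rw [hrepr p.1, hrepr p.2, lft_add, lft_add]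
      exact key4 (a p.1) (a' p.1) (a p.2) (a' p.2) (B p.1 p.2) (h2B p.1 p.2)
    -- iota of bilinear value
    have e3 : iota (b x y) = (∑ j, a j * (a' j * B j j))
        + ((∑ p ∈ P, a p.1 * (a' p.2 * B p.1 p.2)) + (∑ p ∈ P, a' p.1 * (a p.2 * B p.1 p.2))) := by
      rw [hiotab x y]
      rw [pair_split (fun i j => a i * (a' j * B i j))]
      congr 1
      rw [← Finset.sum_add_distrib]
      apply Finset.sum_congr rfl
      intro p _
      rw [hBsym p.2 p.1]
      ring
    show (∑ j, lft (e.repr (x + y) j) * c j) + ∑ p ∈ P, lft (e.repr (x + y) p.1) * (lft (e.repr (x + y) p.2) * B p.1 p.2)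
      = ((∑ j, a j * c j) + ∑ p ∈ P, a p.1 * (a p.2 * B p.1 p.2))
        + ((∑ j, a' j * c j) + ∑ p ∈ P, a' p.1 * (a' p.2 * B p.1 p.2)) + iota (b x y)
    rw [e1, e2, e3]
    ring
  have hq0val : ∀ j, q0 (e j) = c j := by
    intro j
    rw [hq0]
    simp only
    have hrep : e.repr (e j) = Finsupp.single j 1 := e.repr_self j
    have hval : ∀ k, lft (e.repr (e j) k) = if k = j then 1 else 0 := by
      intro k
      rw [hrep]
      rcases eq_or_ne k j with h | h
      · subst h; rw [Finsupp.single_eq_same, if_pos rfl]; rfl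
      · rw [Finsupp.single_eq_of_ne h, if_neg h]; rfl
    have h1 : ∑ k, lft (e.repr (e j) k) * c k = c j := by
      rw [Finset.sum_eq_single j]
      · rw [hval j, if_pos rfl, one_mul]
      · intro k _ hk; rw [hval k, if_neg hk, zero_mul]
      · intro h; exact absurd (Finset.mem_univ j) h
    have h2 : ∑ p ∈ P, lft (e.repr (e j) p.1) * (lft (e.repr (e j) p.2) * iota (b (e p.1) (e p.2))) = 0 := by
      apply Finset.sum_eq_zero
      intro p hp
      simp only [hP, Finset.mem_filter] at hp
      rcases eq_or_ne p.1 j with h | h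
      · have : p.2 ≠ j := by intro hh; rw [h, hh] at hp; exact lt_irrefl _ hp.2
        rw [hval p.2, if_neg this, zero_mul, mul_zero]
      · rw [hval p.1, if_neg h, zero_mul]
    rw [h1, h2, add_zero]
  refine ⟨q0, ⟨hq0enh, hq0val⟩, ?_⟩
  rintro q ⟨hqenh, hqval⟩
  exact quad_uniq b e q q0 hqenh hq0enh (fun j => by rw [hqval j, hq0val j])

end Main

theorem stmt3 {V : Type*} [AddCommGroup V] [Module (ZMod 2) V] [FiniteDimensional (ZMod 2) V]
    (b : LinearMap.BilinForm (ZMod 2) V) (hb : ∀ x y : V, b x y = b y x)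
    (d : ℕ) (e : Module.Basis (Fin d) (ZMod 2) V)
    (c : Fin d → ZMod 4) (hc : ∀ j : Fin d, 2 * c j = iota (b (e j) (e j))) :
    (∃! q : V → ZMod 4, IsQuadEnh (fun x y => b x y) q ∧ ∀ j : Fin d, q (e j) = c j) ∧
    Nat.card {q : V → ZMod 4 // IsQuadEnh (fun x y => b x y) q} = 2 ^ d := by
  constructor
  · exact quad_exu b e hb c hc
  · have hEquiv : {q : V → ZMod 4 // IsQuadEnh (fun x y => b x y) q}
        ≃ {c' : Fin d → ZMod 4 // ∀ j, 2 * c' j = iota (b (e j) (e j))} := by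
      apply Equiv.ofBijective (fun q => ⟨fun j => q.1 (e j), fun j => quad_diag b q.1 q.2 (e j)⟩)
      constructor
      · rintro ⟨q, hq⟩ ⟨q', hq'⟩ h
        simp only [Subtype.mk.injEq] at h ⊢
        exact quad_uniq b e q q' hq hq' (fun j => congrFun h j)
      · rintro ⟨c', hc'⟩
        obtain ⟨q, ⟨hq1, hq2⟩, -⟩ := quad_exu b e hb c' hc'
        exact ⟨⟨q, hq1⟩, by simp only [Subtype.mk.injEq]; funext j; exact hq2 j⟩
    rw [Nat.card_congr hEquiv]
    rw [Nat.card_congr (Equiv.subtypePiEquivPi (p := fun j (x : ZMod 4) => 2 * x = iota (b (e j) (e j))))]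
    rw [Nat.card_pi]
    calc ∏ j : Fin d, Nat.card {x : ZMod 4 // 2 * x = iota (b (e j) (e j))}
        = ∏ _j : Fin d, 2 := Finset.prod_congr rfl (fun j _ => card2 _)
      _ = 2 ^ d := by rw [Finset.prod_const, Finset.card_univ, Fintype.card_fin]
end

section
/- Suppose the symmetric bilinear form b is nondegenerate (i.e. the map V → Hom(V, ℤ/2), x ↦ b(x,·), is injective) and let q be any quadratic enhancement of b. Then the Arf–Brown–Kervaire Gauss sum ABK(q) is an eighth root of unity: ABK(q)⁸ = 1. In particular |Σ_{x ∈ V} i^{q(x)}| = 2^{dim V / 2}. -/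
set_option linter.unnecessarySeqFocus false

/-- The Arf–Brown–Kervaire Gauss sum `2^{-dim V/2} ∑_x i^{q x}`. -/
noncomputable def ABK {V : Type*} [AddCommGroup V] [Module (ZMod 2) V] [Fintype V]
    (q : V → ZMod 4) : ℂ :=
  (∑ x : V, Complex.I ^ (q x).val) / (Real.sqrt 2 : ℂ) ^ (Module.finrank (ZMod 2) V)

noncomputable def eps (a : ZMod 4) : ℂ := Complex.I ^ a.val
noncomputable def chi (a : ZMod 2) : ℂ := (-1 : ℂ) ^ a.val

lemma I_pow_mod4 (n : ℕ) : Complex.I ^ (n % 4) = Complex.I ^ n := by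
  conv_rhs => rw [← Nat.div_add_mod n 4]
  rw [pow_add, pow_mul, Complex.I_pow_four, one_pow, one_mul]

lemma neg_one_pow_mod2 (n : ℕ) : ((-1 : ℂ)) ^ (n % 2) = (-1 : ℂ) ^ n := by
  conv_rhs => rw [← Nat.div_add_mod n 2]
  rw [pow_add, pow_mul, neg_one_sq, one_pow, one_mul]

lemma eps_add (a c : ZMod 4) : eps (a + c) = eps a * eps c := by
  unfold eps; rw [ZMod.val_add, I_pow_mod4, pow_add]

lemma chi_add (a c : ZMod 2) : chi (a + c) = chi a * chi c := by
  unfold chi; rw [ZMod.val_add, neg_one_pow_mod2, pow_add]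

lemma eps_iota (c : ZMod 2) : eps (iota c) = chi c := by
  unfold eps chi
  have h01 : ∀ a : ZMod 2, a = 0 ∨ a = 1 := by decide
  rcases h01 c with rfl | rfl
  · rw [show (iota 0).val = 0 by decide, show ZMod.val (0 : ZMod 2) = 0 by decide]; simp
  · rw [show (iota 1).val = 2 by decide, show ZMod.val (1 : ZMod 2) = 1 by decide]; simp

lemma eps_pow_four (a : ZMod 4) : eps a ^ 4 = 1 := by
  unfold eps; rw [← pow_mul, mul_comm, pow_mul, Complex.I_pow_four, one_pow]

lemma eps_mul_conj (a : ZMod 4) : eps a * (starRingEnd ℂ) (eps a) = 1 := by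
  rw [Complex.mul_conj]
  unfold eps
  rw [map_pow, Complex.normSq_I, one_pow, Complex.ofReal_one]

lemma chi_zero : chi 0 = 1 := by simp [chi]

lemma charSum {V : Type*} [AddCommGroup V] [Fintype V] (φ : V → ZMod 2)
    (hφ : ∀ x y, φ (x + y) = φ x + φ y) (v : V) (hv : φ v ≠ 0) :
    ∑ x : V, chi (φ x) = 0 := by
  have hv1 : φ v = 1 := by
    have : ∀ a : ZMod 2, a ≠ 0 → a = 1 := by decide
    exact this _ hv
  have h : ∑ x : V, chi (φ (x + v)) = ∑ x : V, chi (φ x) :=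
    Fintype.sum_equiv (Equiv.addRight v) _ _ fun x => rfl
  have h2 : ∀ x : V, chi (φ (x + v)) = - chi (φ x) := by
    intro x
    rw [hφ, hv1, chi_add]
    rw [show chi 1 = -1 by norm_num [chi, ZMod.val_one], mul_neg_one]
  rw [Finset.sum_congr rfl fun x _ => h2 x, Finset.sum_neg_distrib] at h
  linear_combination (-1/2 : ℂ) * h

theorem stmt11 {V : Type*} [AddCommGroup V] [Module (ZMod 2) V] [Fintype V]
    (b : LinearMap.BilinForm (ZMod 2) V) (hb : ∀ x y : V, b x y = b y x)
    (hnd : Function.Injective fun x : V => b x)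
    (q : V → ZMod 4) (hq : IsQuadEnh (fun x y => b x y) q) :
    (ABK q) ^ 8 = 1 ∧
    ‖∑ x : V, Complex.I ^ (q x).val‖ =
      Real.sqrt 2 ^ (Module.finrank (ZMod 2) V) := by
  classical
  set n := Module.finrank (ZMod 2) V with hn
  have hq' : ∀ x y : V, q (x + y) = q x + q y + iota (b x y) := hq
  have hzm2 : ∀ a : ZMod 2, a + a = 0 := by decide
  have addself : ∀ x : V, x + x = 0 := by
    intro x
    have h : (2 : ZMod 2) • x = 0 := by
      rw [show (2 : ZMod 2) = 0 by decide, zero_smul]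
    rwa [two_smul] at h
  have hiota0 : iota 0 = 0 := by decide
  have q0 : q 0 = 0 := by
    have h := hq' 0 0
    simp only [map_zero, LinearMap.zero_apply, zero_add, add_zero] at h
    rw [hiota0, add_zero] at h
    exact left_eq_add.mp h
  have hqq : ∀ x : V, q x + q x = iota (b x x) := by
    intro x
    have h := hq' x x
    rw [addself x, q0] at h
    have hii : iota (b x x) + iota (b x x) = 0 := by
      have : ∀ a : ZMod 2, iota a + iota a = 0 := by decide
      exact this _
    linear_combination -h - hii
  have heps : ∀ x y : V, eps (q (x + y)) = eps (q x) * eps (q y) * chi (b x y) := by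
    intro x y
    rw [hq' x y, eps_add, eps_add, eps_iota]
  set S := ∑ x : V, Complex.I ^ (q x).val with hS
  have hSe : S = ∑ x : V, eps (q x) := rfl
  set N := (Fintype.card V : ℂ) with hNdef
  have heps0 : eps (q 0) = 1 := by rw [q0]; simp [eps, ZMod.val_zero]
  have hinner : ∀ z : V, (∑ y : V, chi (b y z)) = if z = 0 then N else 0 := by
    intro z
    split_ifs with h
    · subst h
      rw [Finset.sum_congr rfl fun y _ => by rw [map_zero (b y), chi_zero]]
      simp [hNdef]
    · obtain ⟨v, hv⟩ : ∃ v : V, b v z ≠ 0 := by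
        by_contra hc
        push_neg at hc
        have hbz : b z = b 0 := by
          ext w
          rw [hb z w, hc w]
          simp
        exact h (hnd hbz)
      exact charSum (fun y => b y z) (fun x y => by show (b (x+y)) z = b x z + b y z; rw [map_add, LinearMap.add_apply]) v hv
  have hconj : S * (starRingEnd ℂ) S = N := by
    calc S * (starRingEnd ℂ) S
        = ∑ x : V, ∑ y : V, eps (q x) * (starRingEnd ℂ) (eps (q y)) := by
          rw [hSe, map_sum, Finset.sum_mul_sum]
      _ = ∑ y : V, ∑ x : V, eps (q x) * (starRingEnd ℂ) (eps (q y)) := Finset.sum_comm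
      _ = ∑ y : V, ∑ z : V, eps (q (y + z)) * (starRingEnd ℂ) (eps (q y)) := by
          refine Finset.sum_congr rfl fun y _ => ?_
          exact (Fintype.sum_equiv (Equiv.addLeft y) _ _ fun z => rfl).symm
      _ = ∑ y : V, ∑ z : V, eps (q z) * chi (b y z) := by
          refine Finset.sum_congr rfl fun y _ => Finset.sum_congr rfl fun z _ => ?_
          rw [heps y z, show eps (q y) * eps (q z) * chi (b y z) * (starRingEnd ℂ) (eps (q y))
            = eps (q y) * (starRingEnd ℂ) (eps (q y)) * (eps (q z) * chi (b y z)) from by ring,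
            eps_mul_conj, one_mul]
      _ = ∑ z : V, eps (q z) * ∑ y : V, chi (b y z) := by
          rw [Finset.sum_comm]
          exact Finset.sum_congr rfl fun z _ => (Finset.mul_sum _ _ _).symm
      _ = N := by
          have hterm : ∀ z : V, eps (q z) * ∑ y : V, chi (b y z)
              = if z = 0 then eps (q z) * N else 0 := by
            intro z; rw [hinner z]; split_ifs <;> simp
          rw [Finset.sum_congr rfl fun z _ => hterm z,
            Finset.sum_ite_eq' Finset.univ 0 (fun z => eps (q z) * N)]
          simp [heps0]
  have hT : ∀ z : V, (∑ x : V, chi (b x x + b x z)) =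
      if (∀ x : V, b x x + b x z = 0) then N else 0 := by
    intro z
    split_ifs with h
    · rw [Finset.sum_congr rfl fun x _ => by rw [h x, chi_zero]]
      simp [hNdef]
    · push_neg at h
      obtain ⟨v, hv⟩ := h
      refine charSum (fun x => b x x + b x z) ?_ v hv
      intro x y
      simp only [map_add, LinearMap.add_apply]
      rw [hb y x]
      linear_combination hzm2 (b x y)
  have huniq : ∀ z z' : V, (∀ x, b x x + b x z = 0) → (∀ x, b x x + b x z' = 0) → z = z' := by
    intro z z' h1 h2
    apply hnd
    show b z = b z'
    ext w
    rw [hb z w, hb z' w]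
    linear_combination h1 w - h2 w
  have hS2 : S ^ 2 = ∑ z : V, eps (q z) * ∑ x : V, chi (b x x + b x z) := by
    calc S ^ 2 = ∑ x : V, ∑ y : V, eps (q x) * eps (q y) := by
          rw [pow_two, hSe, Finset.sum_mul_sum]
      _ = ∑ x : V, ∑ z : V, eps (q x) * eps (q (x + z)) := by
          refine Finset.sum_congr rfl fun x _ => ?_
          exact (Fintype.sum_equiv (Equiv.addLeft x) _ _ fun z => rfl).symm
      _ = ∑ x : V, ∑ z : V, eps (q z) * chi (b x x + b x z) := by
          refine Finset.sum_congr rfl fun x _ => Finset.sum_congr rfl fun z _ => ?_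
          have hx2 : eps (q x) * eps (q x) = chi (b x x) := by
            rw [← eps_add, hqq x, eps_iota]
          rw [heps x z, chi_add,
            show eps (q x) * (eps (q x) * eps (q z) * chi (b x z))
              = eps (q x) * eps (q x) * eps (q z) * chi (b x z) from by ring,
            hx2]
          ring
      _ = ∑ z : V, eps (q z) * ∑ x : V, chi (b x x + b x z) := by
          rw [Finset.sum_comm]
          exact Finset.sum_congr rfl fun z _ => (Finset.mul_sum _ _ _).symm
  have hNne : N ≠ 0 := by
    rw [hNdef]
    exact_mod_cast Fintype.card_ne_zero
  have hex : ∃ c : V, ∀ x : V, b x x + b x c = 0 := by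
    by_contra hcon
    push_neg at hcon
    have hz : S ^ 2 = 0 := by
      rw [hS2]
      refine Finset.sum_eq_zero fun z _ => ?_
      rw [hT z, if_neg, mul_zero]
      intro hall
      obtain ⟨x, hx⟩ := hcon z
      exact hx (hall x)
    have hS0 : S = 0 := by
      exact pow_eq_zero_iff (by norm_num) |>.mp hz
    rw [hS0, zero_mul] at hconj
    exact hNne hconj.symm
  obtain ⟨c, hc⟩ := hex
  have hS2c : S ^ 2 = N * eps (q c) := by
    rw [hS2, Finset.sum_eq_single c]
    · rw [hT c, if_pos hc]; ring
    · intro z _ hz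
      rw [hT z, if_neg, mul_zero]
      intro hall
      exact hz (huniq z c hall hc)
    · intro h; exact absurd (Finset.mem_univ c) h
  have hS8 : S ^ 8 = N ^ 4 := by
    rw [show S ^ 8 = (S ^ 2) ^ 4 from by ring, hS2c, mul_pow, eps_pow_four, mul_one]
  have hcard : Fintype.card V = 2 ^ n := by
    have h := Module.card_eq_pow_finrank (K := ZMod 2) (V := V)
    rwa [ZMod.card] at h
  constructor
  · have hden : ((Real.sqrt 2 : ℂ)) ^ n ≠ 0 := by
      apply pow_ne_zero
      simpa using Real.sqrt_ne_zero'.mpr (by norm_num : (0:ℝ) < 2)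
    simp only [ABK, ← hn, ← hS]
    rw [div_pow, hS8, ← pow_mul]
    have h2 : ((Real.sqrt 2 : ℂ)) ^ (n * 8) = N ^ 4 := by
      rw [show n * 8 = 2 * (4 * n) from by ring, pow_mul,
        show ((Real.sqrt 2 : ℝ) : ℂ) ^ 2 = 2 from by
          rw [← Complex.ofReal_pow, Real.sq_sqrt (by norm_num : (0:ℝ) ≤ 2)]
          norm_num,
        hNdef, hcard]
      push_cast
      ring
    rw [h2, div_self (pow_ne_zero 4 hNne)]
  · have hnormSq : Complex.normSq S = (Fintype.card V : ℝ) := by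
      have h := hconj
      rw [Complex.mul_conj, hNdef] at h
      exact_mod_cast h
    rw [Complex.norm_def, hnormSq, hcard]
    push_cast
    rw [show ((2:ℝ)) ^ n = (Real.sqrt 2 ^ n) ^ 2 from by
      rw [← pow_mul, mul_comm, pow_mul, Real.sq_sqrt (by norm_num : (0:ℝ) ≤ 2)]]
    exact Real.sqrt_sq (by positivity)
end

section
/- For all natural numbers p and q, setting n = p + q, the following identity holds in ℂ: Σ_{S ⊆ {1,…,n}} (−1)^{|S|(|S|−1)/2} · i^{(|S| mod 2)} · (−1)^{|S ∩ {p+1,…,n}|} = 2^{n/2} · exp(iπ(p−q)/4). Equivalently, this sum equals (1+i)^p (1−i)^q. -/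
open Finset

lemma aux16 (k : ℕ) :
    (-1 : ℂ) ^ (k * (k - 1) / 2) * Complex.I ^ (k % 2) = Complex.I ^ k := by
  induction k with
  | zero => simp
  | succ k ih =>
    have hsum : ∀ m : ℕ, m * (m - 1) / 2 = ∑ i ∈ range m, i := by
      intro m
      rw [Finset.sum_range_id]
    have h1 : (k + 1) * (k + 1 - 1) / 2 = k * (k - 1) / 2 + k := by
      rw [hsum, hsum, Finset.sum_range_succ]
    have h2 : Complex.I ^ ((k + 1) % 2) =
        Complex.I ^ (k % 2) * Complex.I * (-1 : ℂ) ^ k := by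
      rcases Nat.even_or_odd k with he | ho
      · rw [Nat.even_iff] at he
        have : (k + 1) % 2 = 1 := by omega
        rw [this, he, Even.neg_one_pow (Nat.even_iff.mpr he)]
        simp
      · rw [Nat.odd_iff] at ho
        have : (k + 1) % 2 = 0 := by omega
        rw [this, ho, Odd.neg_one_pow (Nat.odd_iff.mpr ho)]
        simp [Complex.I_mul_I]
    rw [h1, h2, pow_add, pow_succ]
    calc (-1 : ℂ) ^ (k * (k - 1) / 2) * (-1 : ℂ) ^ k *
          (Complex.I ^ (k % 2) * Complex.I * (-1 : ℂ) ^ k)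
        = ((-1 : ℂ) ^ (k * (k - 1) / 2) * Complex.I ^ (k % 2)) * Complex.I *
            ((-1 : ℂ) ^ k * (-1 : ℂ) ^ k) := by ring
      _ = Complex.I ^ k * Complex.I := by
          rw [ih, ← pow_add, ← two_mul, pow_mul]
          simp

lemma key16 (p q : ℕ) :
    (∑ S : Finset (Fin (p + q)),
        (-1 : ℂ) ^ (S.card * (S.card - 1) / 2) * Complex.I ^ (S.card % 2) *
          (-1 : ℂ) ^ (S.filter fun j : Fin (p + q) => p ≤ (j : ℕ)).card) =
      (1 + Complex.I) ^ p * (1 - Complex.I) ^ q := by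
  have step1 : ∀ S : Finset (Fin (p + q)),
      (-1 : ℂ) ^ (S.card * (S.card - 1) / 2) * Complex.I ^ (S.card % 2) *
          (-1 : ℂ) ^ (S.filter fun j : Fin (p + q) => p ≤ (j : ℕ)).card =
      ∏ j ∈ S, (if p ≤ (j : ℕ) then -Complex.I else Complex.I) := by
    intro S
    rw [aux16]
    rw [Finset.prod_ite (fun _ => -Complex.I) (fun _ => Complex.I),
      Finset.prod_const, Finset.prod_const]
    have hcard : (S.filter fun j : Fin (p + q) => p ≤ (j : ℕ)).card +
        (S.filter fun j : Fin (p + q) => ¬ p ≤ (j : ℕ)).card = S.card :=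
      Finset.card_filter_add_card_filter_not _
    rw [← hcard, pow_add, neg_pow]
    ring
  rw [Finset.sum_congr rfl fun S _ => step1 S]
  have step2 : (∑ S : Finset (Fin (p + q)),
      ∏ j ∈ S, (if p ≤ (j : ℕ) then -Complex.I else Complex.I)) =
      ∏ j : Fin (p + q), ((if p ≤ (j : ℕ) then -Complex.I else Complex.I) + 1) := by
    rw [Finset.prod_add]
    simp [Finset.powerset_univ]
  rw [step2, Fin.prod_univ_add]
  have hp : ∀ i : Fin p,
      ((if p ≤ ((Fin.castAdd q i : Fin (p + q)) : ℕ) then -Complex.I else Complex.I) + 1)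
        = 1 + Complex.I := by
    intro i
    have : ¬ p ≤ ((Fin.castAdd q i : Fin (p + q)) : ℕ) := by
      simp [Fin.coe_castAdd]
    rw [if_neg this]; ring
  have hq : ∀ i : Fin q,
      ((if p ≤ ((Fin.natAdd p i : Fin (p + q)) : ℕ) then -Complex.I else Complex.I) + 1)
        = 1 - Complex.I := by
    intro i
    have : p ≤ ((Fin.natAdd p i : Fin (p + q)) : ℕ) := by
      simp [Fin.coe_natAdd]
    rw [if_pos this]; ring
  rw [Finset.prod_congr rfl fun i _ => hp i, Finset.prod_congr rfl fun i _ => hq i,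
    Finset.prod_const, Finset.prod_const]
  simp

lemma exp16 (p q : ℕ) :
    (1 + Complex.I) ^ p * (1 - Complex.I) ^ q =
      (Real.sqrt 2 : ℂ) ^ (p + q) *
        Complex.exp (Complex.I * (Real.pi : ℂ) * ((p : ℂ) - (q : ℂ)) / 4) := by
  have hs : ((Real.sqrt 2 : ℝ) : ℂ) * ((Real.sqrt 2 : ℝ) : ℂ) = 2 := by
    rw [← Complex.ofReal_mul, Real.mul_self_sqrt (by norm_num)]
    norm_num
  have h1 : (1 + Complex.I) =
      (Real.sqrt 2 : ℂ) * Complex.exp (((Real.pi / 4 : ℝ) : ℂ) * Complex.I) := by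
    rw [Complex.exp_mul_I, ← Complex.ofReal_cos, ← Complex.ofReal_sin,
      Real.cos_pi_div_four, Real.sin_pi_div_four]
    push_cast
    linear_combination (-(1 + Complex.I) / 2) * hs
  have h2 : (1 - Complex.I) =
      (Real.sqrt 2 : ℂ) * Complex.exp (((-(Real.pi / 4) : ℝ) : ℂ) * Complex.I) := by
    rw [Complex.exp_mul_I, ← Complex.ofReal_cos, ← Complex.ofReal_sin,
      Real.cos_neg, Real.sin_neg, Real.cos_pi_div_four, Real.sin_pi_div_four]
    push_cast
    linear_combination (-(1 - Complex.I) / 2) * hs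
  rw [h1, h2, mul_pow, mul_pow, ← Complex.exp_nat_mul, ← Complex.exp_nat_mul]
  have hre : ((Real.sqrt 2 : ℝ) : ℂ) ^ p *
      Complex.exp ((p : ℂ) * (((Real.pi / 4 : ℝ) : ℂ) * Complex.I)) *
      (((Real.sqrt 2 : ℝ) : ℂ) ^ q *
        Complex.exp ((q : ℂ) * (((-(Real.pi / 4) : ℝ) : ℂ) * Complex.I))) =
      ((Real.sqrt 2 : ℝ) : ℂ) ^ (p + q) *
        (Complex.exp ((p : ℂ) * (((Real.pi / 4 : ℝ) : ℂ) * Complex.I)) *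
          Complex.exp ((q : ℂ) * (((-(Real.pi / 4) : ℝ) : ℂ) * Complex.I))) := by
    rw [pow_add]; ring
  rw [hre, ← Complex.exp_add]
  congr 1
  push_cast
  ring_nf

theorem stmt16 (p q : ℕ) :
    (∑ S : Finset (Fin (p + q)),
        (-1 : ℂ) ^ (S.card * (S.card - 1) / 2) * Complex.I ^ (S.card % 2) *
          (-1 : ℂ) ^ (S.filter fun j : Fin (p + q) => p ≤ (j : ℕ)).card) =
      (Real.sqrt 2 : ℂ) ^ (p + q) *
        Complex.exp (Complex.I * (Real.pi : ℂ) * ((p : ℂ) - (q : ℂ)) / 4) ∧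
    (∑ S : Finset (Fin (p + q)),
        (-1 : ℂ) ^ (S.card * (S.card - 1) / 2) * Complex.I ^ (S.card % 2) *
          (-1 : ℂ) ^ (S.filter fun j : Fin (p + q) => p ≤ (j : ℕ)).card) =
      (1 + Complex.I) ^ p * (1 - Complex.I) ^ q := by
  exact ⟨(key16 p q).trans (exp16 p q), key16 p q⟩
end

section
/- Let Q be a nondegenerate quadratic form on a real vector space W of finite dimension n. Then the trace form η on the Clifford algebra Cℓ(Q), defined by η(x,y) = Tr(L(x·y)) where L(z) denotes the ℝ-linear endomorphism of Cℓ(Q) given by left multiplication by z, is a nondegenerate symmetric bilinear form. -/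
namespace Stmt18
open CliffordAlgebra

variable {W : Type*} [AddCommGroup W] [Module ℝ W] (Q : QuadraticForm ℝ W)
variable {n : ℕ} (v : Fin n → W)

def clP (l : List (Fin n)) : CliffordAlgebra Q := (l.map fun i => ι Q (v i)).prod

def clB (S : Finset (Fin n)) : CliffordAlgebra Q :=
  clP Q v ((List.finRange n).filter (· ∈ S))

@[simp] lemma clP_nil : clP Q v [] = 1 := rfl

@[simp] lemma clP_cons (i : Fin n) (l : List (Fin n)) :
    clP Q v (i :: l) = ι Q (v i) * clP Q v l := by simp [clP]

@[simp] lemma clB_empty : clB Q v (∅ : Finset (Fin n)) = 1 := by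
  simp [clB]

lemma anticomm (horth : ∀ i j, i ≠ j → QuadraticMap.polar Q (v i) (v j) = 0)
    {i j : Fin n} (h : i ≠ j) :
    ι Q (v i) * ι Q (v j) = -(ι Q (v j) * ι Q (v i)) := by
  rw [ι_mul_ι_comm, horth _ _ h, map_zero, zero_sub]

lemma clP_comm (horth : ∀ i j, i ≠ j → QuadraticMap.polar Q (v i) (v j) = 0)
    (l : List (Fin n)) (i : Fin n) :
    ι Q (v i) * clP Q v l
      = ((-1 : ℝ) ^ (l.countP (fun j => j ≠ i))) • (clP Q v l * ι Q (v i)) := by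
  induction l with
  | nil => simp
  | cons j t ih =>
    by_cases hji : j = i
    · subst hji
      rw [clP_cons, ih, mul_smul_comm, ← mul_assoc]
      congr 2
      simp [List.countP_cons]
    · rw [clP_cons, ← mul_assoc, anticomm Q v horth (Ne.symm hji), neg_mul, mul_assoc, ih,
        mul_smul_comm, ← mul_assoc, ← neg_smul]
      congr 1
      rw [List.countP_cons]
      simp [hji, pow_succ]

lemma clP_involute (l : List (Fin n)) :
    involute (clP Q v l) = ((-1 : ℝ) ^ l.length) • clP Q v l := by
  induction l with
  | nil => simp
  | cons j t ih =>
    rw [clP_cons, map_mul, involute_ι, ih, List.length_cons, pow_succ, neg_mul, mul_smul_comm,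
      ← neg_smul]
    congr 1
    ring

lemma clP_conj (horth : ∀ i j, i ≠ j → QuadraticMap.polar Q (v i) (v j) = 0)
    (l : List (Fin n)) (i : Fin n) :
    ι Q (v i) * clP Q v l * ι Q (v i)
      = (((-1 : ℝ) ^ (l.countP (fun j => j ≠ i))) * Q (v i)) • clP Q v l := by
  rw [clP_comm Q v horth, smul_mul_assoc, mul_assoc, ι_sq_scalar, ← Algebra.commutes,
    ← Algebra.smul_def, smul_smul, mul_comm]

lemma len_countP (l : List (Fin n)) (i : Fin n) :
    l.length = l.countP (fun j => j ≠ i) + l.count i := by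
  induction l with
  | nil => simp
  | cons j t ih =>
    by_cases h : j = i <;>
      simp [List.countP_cons, List.count_cons, h, ih] <;> omega

lemma count_clList (i : Fin n) (S : Finset (Fin n)) :
    ((List.finRange n).filter (· ∈ S)).count i = if i ∈ S then 1 else 0 := by
  by_cases h : i ∈ S
  · rw [if_pos h, List.count_filter (by simpa using h)]
    exact List.count_eq_one_of_mem (List.nodup_finRange n) (List.mem_finRange i)
  · rw [if_neg h, List.count_eq_zero]
    intro hmem
    rw [List.mem_filter] at hmem
    exact h (by simpa using hmem.2)

/-- The conjugation operator `x ↦ Q(vᵢ)⁻¹ • (eᵢ * involute x * eᵢ)`. -/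
noncomputable def clC (i : Fin n) : CliffordAlgebra Q →ₗ[ℝ] CliffordAlgebra Q :=
  (Q (v i))⁻¹ • (LinearMap.mulRight ℝ (ι Q (v i)) ∘ₗ LinearMap.mulLeft ℝ (ι Q (v i)) ∘ₗ
    (involute (Q := Q)).toLinearMap)

lemma clC_clB (horth : ∀ i j, i ≠ j → QuadraticMap.polar Q (v i) (v j) = 0)
    (hQv : ∀ i, Q (v i) ≠ 0) (i : Fin n) (S : Finset (Fin n)) :
    clC Q v i (clB Q v S) = (if i ∈ S then (-1 : ℝ) else 1) • clB Q v S := by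
  set l := (List.finRange n).filter (· ∈ S) with hl
  have h1 : clC Q v i (clB Q v S)
      = (Q (v i))⁻¹ • (ι Q (v i) * involute (clP Q v l) * ι Q (v i)) := by
    simp [clC, clB, mul_assoc, hl]
  rw [h1, clP_involute, mul_smul_comm, smul_mul_assoc, clP_conj Q v horth, smul_smul, smul_smul,
    clB, ← hl]
  congr 1
  rw [mul_assoc]
  have hc := len_countP l i
  have hcount : l.count i = if i ∈ S then 1 else 0 := count_clList i S
  rw [hc, hcount]
  set c := l.countP (fun j => j ≠ i) with hcdef
  have key : (-1 : ℝ) ^ c * (-1) ^ c = 1 := by rw [← mul_pow]; norm_num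
  by_cases h : i ∈ S
  · simp only [h, if_true, pow_add]
    have h3 : (Q (v i))⁻¹ * ((-1 : ℝ) ^ c * (-1) ^ 1 * ((-1) ^ c * Q (v i)))
        = -(((-1 : ℝ) ^ c * (-1) ^ c) * ((Q (v i))⁻¹ * Q (v i))) := by ring
    rw [h3, key, inv_mul_cancel₀ (hQv i)]
    norm_num
  · simp only [h, if_false, pow_add, pow_zero, mul_one]
    have h3 : (Q (v i))⁻¹ * ((-1 : ℝ) ^ c * ((-1) ^ c * Q (v i)))
        = (((-1 : ℝ) ^ c * (-1) ^ c) * ((Q (v i))⁻¹ * Q (v i))) := by ring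
    rw [h3, key, inv_mul_cancel₀ (hQv i)]
    norm_num

/-- Projection that kills `clB S` when `i ∈ S` and fixes it otherwise. -/
noncomputable def clProj (i : Fin n) : CliffordAlgebra Q →ₗ[ℝ] CliffordAlgebra Q :=
  (2 : ℝ)⁻¹ • (LinearMap.id + clC Q v i)

lemma clProj_clB (horth : ∀ i j, i ≠ j → QuadraticMap.polar Q (v i) (v j) = 0)
    (hQv : ∀ i, Q (v i) ≠ 0) (i : Fin n) (S : Finset (Fin n)) :
    clProj Q v i (clB Q v S) = if i ∈ S then 0 else clB Q v S := by
  rw [clProj]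
  simp only [LinearMap.smul_apply, LinearMap.add_apply, LinearMap.id_apply,
    clC_clB Q v horth hQv]
  by_cases h : i ∈ S <;> simp [h] <;> module

/-- Composite of all projections. -/
noncomputable def clPP : CliffordAlgebra Q →ₗ[ℝ] CliffordAlgebra Q :=
  (List.finRange n).foldr (fun i f => clProj Q v i ∘ₗ f) LinearMap.id

lemma clPP_clB_aux (horth : ∀ i j, i ≠ j → QuadraticMap.polar Q (v i) (v j) = 0)
    (hQv : ∀ i, Q (v i) ≠ 0) (l : List (Fin n)) (S : Finset (Fin n)) :
    (l.foldr (fun i f => clProj Q v i ∘ₗ f) LinearMap.id) (clB Q v S)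
      = if ∀ i ∈ l, i ∉ S then clB Q v S else 0 := by
  induction l with
  | nil => simp
  | cons j t ih =>
    rw [List.foldr_cons, LinearMap.comp_apply, ih]
    by_cases ht : ∀ i ∈ t, i ∉ S
    · rw [if_pos ht, clProj_clB Q v horth hQv]
      by_cases hj : j ∈ S
      · rw [if_pos hj, if_neg (by simp [hj])]
      · rw [if_neg hj, if_pos (by simpa [hj] using ht)]
    · rw [if_neg ht, map_zero, if_neg (by intro h; exact ht fun i hi => h i (by simp [hi]))]

lemma clPP_clB (horth : ∀ i j, i ≠ j → QuadraticMap.polar Q (v i) (v j) = 0)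
    (hQv : ∀ i, Q (v i) ≠ 0) (S : Finset (Fin n)) :
    clPP Q v (clB Q v S) = if S = ∅ then 1 else 0 := by
  rw [clPP, clPP_clB_aux Q v horth hQv]
  by_cases h : S = ∅
  · simp [h]
  · rw [if_neg h, if_neg]
    simp only [List.mem_finRange, forall_true_left]
    rw [← Finset.eq_empty_iff_forall_notMem]
    exact h

lemma gen_mul_clP (horth : ∀ i j, i ≠ j → QuadraticMap.polar Q (v i) (v j) = 0)
    (hQv : ∀ i, Q (v i) ≠ 0) :
    ∀ (m : List (Fin n)), m.Nodup → ∀ (S : Finset (Fin n)) (i : Fin n), i ∈ m →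
      ∃ r : ℝ, r ≠ 0 ∧
        ι Q (v i) * clP Q v (m.filter (· ∈ S)) = r • clP Q v (m.filter (· ∈ symmDiff S {i})) := by
  intro m
  induction m with
  | nil => intro _ S i hi; simp at hi
  | cons j m' ih =>
    intro hnd S i hi
    have hnd' : m'.Nodup := (List.nodup_cons.mp hnd).2
    have hjm' : j ∉ m' := (List.nodup_cons.mp hnd).1
    by_cases hji : j = i
    · subst hji
      -- i = j is the head, i ∉ m'
      have hfilt : ∀ (T : Finset (Fin n)), m'.filter (· ∈ T) = m'.filter (· ∈ (symmDiff T {j})) := by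
        intro T
        refine List.filter_congr ?_
        intro a ha
        have haj : a ≠ j := fun h => hjm' (h ▸ ha)
        simp [Finset.mem_symmDiff, haj]
      by_cases hjS : j ∈ S
      · -- head kept in S-filter, dropped in symmDiff filter
        refine ⟨Q (v j), hQv j, ?_⟩
        rw [List.filter_cons_of_pos (by simpa using hjS),
          List.filter_cons_of_neg (by simp [Finset.mem_symmDiff, hjS]), clP_cons, ← mul_assoc,
          ι_sq_scalar, ← Algebra.smul_def, ← hfilt S]
      · refine ⟨1, one_ne_zero, ?_⟩
        rw [List.filter_cons_of_neg (by simpa using hjS),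
          List.filter_cons_of_pos (by simp [Finset.mem_symmDiff, hjS]), clP_cons, one_smul,
          ← hfilt S]
    · have him' : i ∈ m' := by
        rcases List.mem_cons.mp hi with h | h
        · exact absurd h.symm hji
        · exact h
      obtain ⟨r, hr, hmul⟩ := ih hnd' S i him'
      have hjsd : (j ∈ symmDiff S {i}) ↔ (j ∈ S) := by
        simp [Finset.mem_symmDiff, hji]
      by_cases hjS : j ∈ S
      · refine ⟨-r, neg_ne_zero.mpr hr, ?_⟩
        rw [List.filter_cons_of_pos (by simpa using hjS),
          List.filter_cons_of_pos (by simpa [hjsd] using hjS), clP_cons, clP_cons, ← mul_assoc,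
          anticomm Q v horth (Ne.symm hji), neg_mul, mul_assoc, hmul, mul_smul_comm, neg_smul,
          ← neg_smul]
      · refine ⟨r, hr, ?_⟩
        rw [List.filter_cons_of_neg (by simpa using hjS),
          List.filter_cons_of_neg (by simpa [hjsd] using hjS), hmul]

lemma gen_mul_clB (horth : ∀ i j, i ≠ j → QuadraticMap.polar Q (v i) (v j) = 0)
    (hQv : ∀ i, Q (v i) ≠ 0) (i : Fin n) (S : Finset (Fin n)) :
    ∃ r : ℝ, r ≠ 0 ∧ ι Q (v i) * clB Q v S = r • clB Q v (symmDiff S {i}) :=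
  gen_mul_clP Q v horth hQv (List.finRange n) (List.nodup_finRange n) S i (List.mem_finRange i)

lemma clB_mul_gen (horth : ∀ i j, i ≠ j → QuadraticMap.polar Q (v i) (v j) = 0)
    (hQv : ∀ i, Q (v i) ≠ 0) (i : Fin n) (S : Finset (Fin n)) :
    ∃ r : ℝ, r ≠ 0 ∧ clB Q v S * ι Q (v i) = r • clB Q v (symmDiff S {i}) := by
  obtain ⟨r, hr, hmul⟩ := gen_mul_clB Q v horth hQv i S
  set l := (List.finRange n).filter (· ∈ S) with hl
  have hcomm := clP_comm Q v horth l i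
  set s : ℝ := (-1 : ℝ) ^ (l.countP fun j => j ≠ i) with hs
  have hs0 : s ≠ 0 := by
    rw [hs]; exact pow_ne_zero _ (by norm_num)
  refine ⟨s⁻¹ * r, mul_ne_zero (inv_ne_zero hs0) hr, ?_⟩
  have : clB Q v S * ι Q (v i) = s⁻¹ • (ι Q (v i) * clB Q v S) := by
    rw [clB, ← hl, hcomm, smul_smul, inv_mul_cancel₀ hs0, one_smul]
  rw [this, hmul, smul_smul]

lemma clB_mul_clP (horth : ∀ i j, i ≠ j → QuadraticMap.polar Q (v i) (v j) = 0)
    (hQv : ∀ i, Q (v i) ≠ 0) :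
    ∀ (m : List (Fin n)), m.Nodup → ∀ (S T : Finset (Fin n)), T ⊆ m.toFinset →
      ∃ r : ℝ, r ≠ 0 ∧ clB Q v S * clP Q v (m.filter (· ∈ T)) = r • clB Q v (symmDiff S T) := by
  intro m
  induction m with
  | nil =>
    intro _ S T hT
    have : T = ∅ := by
      rw [← Finset.subset_empty]
      simpa using hT
    subst this
    refine ⟨1, one_ne_zero, ?_⟩
    have : symmDiff S (∅ : Finset (Fin n)) = S := by
      simpa [Finset.bot_eq_empty] using symmDiff_bot S
    simp [this]
  | cons j m' ih =>
    intro hnd S T hT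
    have hnd' : m'.Nodup := (List.nodup_cons.mp hnd).2
    have hjm' : j ∉ m' := (List.nodup_cons.mp hnd).1
    by_cases hjT : j ∈ T
    · obtain ⟨r₁, hr₁, h₁⟩ := clB_mul_gen Q v horth hQv j S
      have hTe : T.erase j ⊆ m'.toFinset := by
        intro a ha
        have := hT (Finset.mem_of_mem_erase ha)
        simp only [List.toFinset_cons, Finset.mem_insert] at this
        rcases this with h | h
        · exact absurd h (Finset.ne_of_mem_erase ha)
        · exact h
      obtain ⟨r₂, hr₂, h₂⟩ := ih hnd' (symmDiff S {j}) (T.erase j) hTe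
      have hfilt : m'.filter (· ∈ T) = m'.filter (· ∈ T.erase j) := by
        refine List.filter_congr ?_
        intro a ha
        have haj : a ≠ j := fun h => hjm' (h ▸ ha)
        simp [Finset.mem_erase, haj]
      have hsd : symmDiff (symmDiff S {j}) (T.erase j) = symmDiff S T := by
        rw [symmDiff_assoc]
        congr 1
        ext a
        by_cases haj : a = j <;> simp [Finset.mem_symmDiff, haj, hjT]
      refine ⟨r₁ * r₂, mul_ne_zero hr₁ hr₂, ?_⟩
      rw [List.filter_cons_of_pos (by simpa using hjT), clP_cons, ← mul_assoc, h₁,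
        smul_mul_assoc, hfilt, h₂, hsd, smul_smul]
    · have hT' : T ⊆ m'.toFinset := by
        intro a ha
        have := hT ha
        simp only [List.toFinset_cons, Finset.mem_insert] at this
        rcases this with h | h
        · exact absurd (h ▸ ha) hjT
        · exact h
      obtain ⟨r, hr, hm⟩ := ih hnd' S T hT'
      refine ⟨r, hr, ?_⟩
      rw [List.filter_cons_of_neg (by simpa using hjT), hm]

lemma clB_mul_clB (horth : ∀ i j, i ≠ j → QuadraticMap.polar Q (v i) (v j) = 0)
    (hQv : ∀ i, Q (v i) ≠ 0) (S T : Finset (Fin n)) :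
    ∃ r : ℝ, r ≠ 0 ∧ clB Q v S * clB Q v T = r • clB Q v (symmDiff S T) :=
  clB_mul_clP Q v horth hQv (List.finRange n) (List.nodup_finRange n) S T
    (by intro a _; simp)

lemma span_top (vb : Module.Basis (Fin n) ℝ W)
    (horth : ∀ i j, i ≠ j → QuadraticMap.polar Q (vb i) (vb j) = 0)
    (hQv : ∀ i, Q (vb i) ≠ 0) :
    Submodule.span ℝ (Set.range (clB Q (⇑vb))) = ⊤ := by
  set M := Submodule.span ℝ (Set.range (clB Q (⇑vb))) with hM
  have h1 : (1 : CliffordAlgebra Q) ∈ M := by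
    have := Submodule.subset_span (R := ℝ) (Set.mem_range_self (f := clB Q (⇑vb)) ∅)
    rwa [clB_empty] at this
  have hgen : ∀ (i : Fin n), ∀ y ∈ M, ι Q (vb i) * y ∈ M := by
    intro i y hy
    refine Submodule.span_induction ?_ ?_ ?_ ?_ hy
    · rintro x ⟨S, rfl⟩
      obtain ⟨r, _, hr⟩ := gen_mul_clB Q (⇑vb) horth hQv i S
      rw [hr]
      exact M.smul_mem r (Submodule.subset_span (Set.mem_range_self _))
    · rw [mul_zero]; exact M.zero_mem
    · intro a b _ _ ha hb
      rw [mul_add]; exact M.add_mem ha hb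
    · intro r a _ ha
      rw [mul_smul_comm]; exact M.smul_mem r ha
  have hmul : ∀ x y, y ∈ M → x * y ∈ M := by
    intro x
    induction x using CliffordAlgebra.induction with
    | algebraMap r =>
      intro y hy
      rw [← Algebra.smul_def]
      exact M.smul_mem r hy
    | ι w =>
      intro y hy
      have hw : ι Q w = ∑ i, vb.repr w i • ι Q (vb i) := by
        conv_lhs => rw [← vb.sum_repr w]
        rw [map_sum]
        simp
      rw [hw, Finset.sum_mul]
      refine Submodule.sum_mem _ fun i _ => ?_
      rw [smul_mul_assoc]
      exact M.smul_mem _ (hgen i y hy)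
    | mul a b ha hb =>
      intro y hy
      rw [mul_assoc]
      exact ha _ (hb _ hy)
    | add a b ha hb =>
      intro y hy
      rw [add_mul]
      exact M.add_mem (ha _ hy) (hb _ hy)
  rw [Submodule.eq_top_iff']
  intro x
  simpa using hmul x 1 h1

lemma cl_finite (vb : Module.Basis (Fin n) ℝ W)
    (horth : ∀ i j, i ≠ j → QuadraticMap.polar Q (vb i) (vb j) = 0)
    (hQv : ∀ i, Q (vb i) ≠ 0) :
    Module.Finite ℝ (CliffordAlgebra Q) := by
  constructor
  rw [← span_top Q vb horth hQv]
  exact Submodule.fg_span (Set.finite_range _)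

lemma clB_indep (vb : Module.Basis (Fin n) ℝ W)
    (horth : ∀ i j, i ≠ j → QuadraticMap.polar Q (vb i) (vb j) = 0)
    (hQv : ∀ i, Q (vb i) ≠ 0) :
    LinearIndependent ℝ (clB Q (⇑vb)) := by
  rw [Fintype.linearIndependent_iff]
  intro g hg T
  choose c hc0 hcmul using clB_mul_clB Q (⇑vb) horth hQv
  have h1 : (∑ S, g S • clB Q (⇑vb) S) * clB Q (⇑vb) T = 0 := by rw [hg, zero_mul]
  rw [Finset.sum_mul] at h1
  simp_rw [smul_mul_assoc, hcmul, smul_smul] at h1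
  have h2 := congrArg (clPP Q (⇑vb)) h1
  rw [map_sum, map_zero] at h2
  simp_rw [map_smul, clPP_clB Q (⇑vb) horth hQv] at h2
  rw [Finset.sum_eq_single T ?h1 ?h2] at h2
  case h1 =>
    intro S _ hST
    have : symmDiff S T ≠ ∅ := by
      rw [Ne, ← Finset.bot_eq_empty, symmDiff_eq_bot]
      exact hST
    rw [if_neg this, smul_zero]
  case h2 =>
    intro h
    exact absurd (Finset.mem_univ T) h
  rw [symmDiff_self, Finset.bot_eq_empty] at h2
  rw [if_pos rfl, smul_eq_zero] at h2
  rcases h2 with h2 | h2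
  · rcases mul_eq_zero.mp h2 with h | h
    · exact h
    · exact absurd h (hc0 T T)
  · exact absurd h2 one_ne_zero

noncomputable def clBasis (vb : Module.Basis (Fin n) ℝ W)
    (horth : ∀ i j, i ≠ j → QuadraticMap.polar Q (vb i) (vb j) = 0)
    (hQv : ∀ i, Q (vb i) ≠ 0) :
    Module.Basis (Finset (Fin n)) ℝ (CliffordAlgebra Q) :=
  Module.Basis.mk (clB_indep Q vb horth hQv) (by rw [span_top Q vb horth hQv])

@[simp] lemma clBasis_apply (vb : Module.Basis (Fin n) ℝ W)
    (horth : ∀ i j, i ≠ j → QuadraticMap.polar Q (vb i) (vb j) = 0)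
    (hQv : ∀ i, Q (vb i) ≠ 0) (S : Finset (Fin n)) :
    clBasis Q vb horth hQv S = clB Q (⇑vb) S :=
  Module.Basis.mk_apply _ _ _

lemma trace_mulLeft_clB (vb : Module.Basis (Fin n) ℝ W)
    (horth : ∀ i j, i ≠ j → QuadraticMap.polar Q (vb i) (vb j) = 0)
    (hQv : ∀ i, Q (vb i) ≠ 0) (U : Finset (Fin n)) (hU : U ≠ ∅) :
    LinearMap.trace ℝ (CliffordAlgebra Q) (LinearMap.mulLeft ℝ (clB Q (⇑vb) U)) = 0 := by
  classical
  set bb := clBasis Q vb horth hQv with hbb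
  rw [LinearMap.trace_eq_matrix_trace ℝ bb, Matrix.trace]
  refine Finset.sum_eq_zero fun V _ => ?_
  rw [Matrix.diag_apply, LinearMap.toMatrix_apply]
  obtain ⟨r, hr0, hrmul⟩ := clB_mul_clB Q (⇑vb) horth hQv U V
  rw [LinearMap.mulLeft_apply, clBasis_apply, hrmul,
    show clB Q (⇑vb) (symmDiff U V) = bb (symmDiff U V) from (clBasis_apply _ _ _ _ _).symm,
    map_smul, Module.Basis.repr_self]
  have hne : symmDiff U V ≠ V := by
    intro h
    apply hU
    ext a
    have := Finset.ext_iff.mp h a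
    simp only [Finset.mem_symmDiff] at this
    simp only [Finset.notMem_empty, iff_false]
    tauto
  simp [Finsupp.single_apply, hne]

end Stmt18

open Stmt18 in
theorem stmt18 {W : Type*} [AddCommGroup W] [Module ℝ W] [FiniteDimensional ℝ W]
    (Q : QuadraticForm ℝ W)
    (hQ : (QuadraticMap.polarBilin Q).Nondegenerate) :
    (∀ x y : CliffordAlgebra Q,
      LinearMap.trace ℝ (CliffordAlgebra Q) (LinearMap.mulLeft ℝ (x * y)) =
        LinearMap.trace ℝ (CliffordAlgebra Q) (LinearMap.mulLeft ℝ (y * x))) ∧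
    (∀ x : CliffordAlgebra Q,
      (∀ y : CliffordAlgebra Q,
        LinearMap.trace ℝ (CliffordAlgebra Q) (LinearMap.mulLeft ℝ (x * y)) = 0) →
      x = 0) := by
  classical
  constructor
  · intro x y
    rw [LinearMap.mulLeft_mul, LinearMap.mulLeft_mul]
    exact LinearMap.trace_mul_comm ℝ _ _
  · intro x hx
    have hsymm : (QuadraticMap.polarBilin Q).IsSymm := by
      refine ⟨fun x y => ?_⟩
      simp only [RingHom.id_apply, QuadraticMap.polarBilin_apply_apply]
      exact QuadraticMap.polar_comm (⇑Q) x y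
    obtain ⟨vb, hvb⟩ := LinearMap.BilinForm.exists_orthogonal_basis hsymm
    have horth : ∀ i j, i ≠ j → QuadraticMap.polar Q (vb i) (vb j) = 0 := by
      intro i j hij
      exact hvb hij
    have hQv : ∀ i, Q (vb i) ≠ 0 := by
      intro i h
      have hzero : (QuadraticMap.polarBilin Q) (vb i) = 0 := by
        refine vb.ext fun j => ?_
        by_cases hij : i = j
        · subst hij
          show QuadraticMap.polar Q (vb i) (vb i) = 0
          rw [QuadraticMap.polar_self, h]
          simp
        · exact horth i j hij
      have hv0 : vb i = 0 := hQ.1 (vb i) fun w => by rw [hzero]; rfl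
      exact vb.ne_zero i hv0
    haveI := cl_finite Q vb horth hQv
    set bb := clBasis Q vb horth hQv with hbb
    choose c hc0 hcmul using clB_mul_clB Q (⇑vb) horth hQv
    have hx' : ∀ T, bb.repr x T = 0 := by
      intro T
      have h0 := hx (clB Q (⇑vb) T)
      have hxe : x = ∑ V, bb.repr x V • clB Q (⇑vb) V := by
        conv_lhs => rw [← bb.sum_repr x]
        refine Finset.sum_congr rfl fun V _ => ?_
        rw [hbb, clBasis_apply]
      rw [hxe, Finset.sum_mul] at h0
      simp_rw [smul_mul_assoc, hcmul, smul_smul] at h0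
      have hml : LinearMap.mulLeft ℝ
            (∑ V, ((bb.repr x V) * c V T) • clB Q (⇑vb) (symmDiff V T))
          = ∑ V, ((bb.repr x V) * c V T) • LinearMap.mulLeft ℝ (clB Q (⇑vb) (symmDiff V T)) := by
        ext z
        simp [LinearMap.mulLeft_apply, Finset.sum_mul, smul_mul_assoc, LinearMap.sum_apply]
      rw [hml, map_sum] at h0
      simp_rw [map_smul] at h0
      rw [Finset.sum_eq_single T ?k1 ?k2] at h0
      case k1 =>
        intro V _ hVT
        have hne : symmDiff V T ≠ ∅ := by
          rw [Ne, ← Finset.bot_eq_empty, symmDiff_eq_bot]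
          exact hVT
        rw [trace_mulLeft_clB Q vb horth hQv _ hne, smul_zero]
      case k2 =>
        intro h
        exact absurd (Finset.mem_univ T) h
      rw [symmDiff_self, Finset.bot_eq_empty, clB_empty, LinearMap.mulLeft_one,
        LinearMap.trace_id] at h0
      have hfr : ((Module.finrank ℝ (CliffordAlgebra Q) : ℝ)) ≠ 0 := by
        have : 0 < Module.finrank ℝ (CliffordAlgebra Q) := Module.finrank_pos
        exact_mod_cast this.ne'
      rw [smul_eq_mul] at h0
      rcases mul_eq_zero.mp h0 with h | h
      · rcases mul_eq_zero.mp h with h | h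
        · exact h
        · exact absurd h (hc0 T T)
      · exact absurd h hfr
    have hrepr : bb.repr x = 0 := Finsupp.ext hx'
    exact (LinearEquiv.map_eq_zero_iff bb.repr).mp hrepr
end
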